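/- arXiv:1806.01636 — 2 statements merged into one kernel-verified Lean document; each statement's English description precedes it below -/
import Mathlib

section
/- Let (𝒱,𝒯_#) be a natural space derived from the pre-natural space (V,#,⊑), and let a ∈ V be a basic dot. Then the set {z ∈ 𝒱 : z # a} is open in the natural topology 𝒯_#. -/
/-! # Natural Topology: basic framework (Waaldijk) -/

/-- A pre-natural space: a countable set of basic dots with a decidable
pre-apartness `apart` and a decidable refinement partial order `refines`. -/
structure PreNaturalSpace (V : Type) : Type where
  countable' : Countable V
  apart : V → V → Prop
  refines : V → V → Prop
  apart_dec : DecidableRel apart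
  refines_dec : DecidableRel refines
  apart_symm : ∀ a b, apart a b → apart b a
  apart_irrefl : ∀ a, ¬ apart a a
  apart_mono : ∀ a b c, refines a b → apart c b → apart c a
  refines_refl : ∀ a, refines a a
  refines_trans : ∀ a b c, refines a b → refines b c → refines a c
  refines_antisymm : ∀ a b, refines a b → refines b a → a = b

namespace PreNaturalSpace

variable {V W : Type}

/-- `a ≺ b` : strict refinement. -/
def strict (P : PreNaturalSpace V) (a b : V) : Prop := P.refines a b ∧ a ≠ b

/-- A point is a shrinking sequence of dots deciding every apart pair of dots. -/
structure IsPoint (P : PreNaturalSpace V) (p : ℕ → V) : Prop where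
  mono : ∀ n, P.refines (p (n + 1)) (p n)
  shrink : ∀ n, ∃ m, P.strict (p m) (p n)
  decides : ∀ a b, P.apart a b → ∃ m, P.apart (p m) a ∨ P.apart (p m) b

/-- The set of points of a pre-natural space. -/
def Pt (P : PreNaturalSpace V) : Type := { p : ℕ → V // P.IsPoint p }

/-- `p` begins with the dot `a` : some `p m ≺ a`. -/
def begins (P : PreNaturalSpace V) (p : ℕ → V) (a : V) : Prop := ∃ m, P.strict (p m) a

/-- Apartness between a dot and a point. -/
def dApart (P : PreNaturalSpace V) (a : V) (p : ℕ → V) : Prop := ∃ m, P.apart (p m) a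

/-- Apartness between points. -/
def pApart (P : PreNaturalSpace V) (p q : P.Pt) : Prop := ∃ n, P.apart (p.1 n) (q.1 n)

/-- Equivalence of points: the negation of apartness. -/
def pEquiv (P : PreNaturalSpace V) (p q : P.Pt) : Prop := ¬ P.pApart p q

variable (P : PreNaturalSpace V)

lemma refines_of_le {p : ℕ → V} (hp : ∀ n, P.refines (p (n + 1)) (p n)) :
    ∀ {m k : ℕ}, m ≤ k → P.refines (p k) (p m) := by
  intro m k h
  induction h with
  | refl => exact P.refines_refl _
  | step h ih => exact P.refines_trans _ _ _ (hp _) ih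

lemma begins_mono {z : ℕ → V} (hz : P.IsPoint z) {a b : V} (hab : P.refines a b)
    (h : P.begins z a) : P.begins z b := by
  obtain ⟨j, hj1, hj2⟩ := h
  have hzb : P.refines (z j) b := P.refines_trans _ _ _ hj1 hab
  by_cases he : z j = b
  · obtain ⟨i, hi1, hi2⟩ := hz.shrink j
    exact ⟨i, P.refines_trans _ _ _ hi1 hzb, fun h' => hi2 (h'.trans he.symm)⟩
  · exact ⟨j, hzb, he⟩

/-- The natural (apartness) topology as a predicate on subsets of the point set. -/
def NatOpen (U : Set P.Pt) : Prop :=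
  ∀ x ∈ U, ∀ y : P.Pt, P.pApart y x ∨ ∃ m, { z : P.Pt | P.begins z.1 (y.1 m) } ⊆ U

instance instTopPt : TopologicalSpace P.Pt where
  IsOpen := P.NatOpen
  isOpen_univ := fun _ _ _ => Or.inr ⟨0, fun _ _ => trivial⟩
  isOpen_inter := by
    intro U U' hU hU' x hx y
    rcases hU x hx.1 y with h | ⟨m, hm⟩
    · exact Or.inl h
    rcases hU' x hx.2 y with h | ⟨k, hk⟩
    · exact Or.inl h
    refine Or.inr ⟨max m k, fun z hz => ⟨hm ?_, hk ?_⟩⟩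
    · exact P.begins_mono z.2 (P.refines_of_le y.2.mono (le_max_left m k)) hz
    · exact P.begins_mono z.2 (P.refines_of_le y.2.mono (le_max_right m k)) hz
  isOpen_sUnion := by
    intro S hS x hx y
    obtain ⟨U, hU, hxU⟩ := hx
    rcases hS U hU x hxU y with h | ⟨m, hm⟩
    · exact Or.inl h
    · exact Or.inr ⟨m, fun z hz => ⟨U, hU, hm hz⟩⟩

lemma pEquiv_refl (p : P.Pt) : P.pEquiv p p := fun ⟨_, h⟩ => P.apart_irrefl _ h

lemma pEquiv_symm {p q : P.Pt} (h : P.pEquiv p q) : P.pEquiv q p :=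
  fun ⟨n, hn⟩ => h ⟨n, P.apart_symm _ _ hn⟩

lemma pEquiv_trans {p q r : P.Pt} (hpq : P.pEquiv p q) (hqr : P.pEquiv q r) :
    P.pEquiv p r := by
  rintro ⟨n, hn⟩
  obtain ⟨m, hm⟩ := q.2.decides (p.1 n) (r.1 n) hn
  rcases hm with hm | hm
  · -- q.1 m apart from p.1 n
    refine hpq ⟨max m n, ?_⟩
    have h1 : P.apart (p.1 n) (q.1 (max m n)) :=
      P.apart_mono _ _ _ (P.refines_of_le q.2.mono (le_max_left m n)) (P.apart_symm _ _ hm)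
    have h2 : P.apart (q.1 (max m n)) (p.1 (max m n)) :=
      P.apart_mono _ _ _ (P.refines_of_le p.2.mono (le_max_right m n)) (P.apart_symm _ _ h1)
    exact P.apart_symm _ _ h2
  · refine hqr ⟨max m n, ?_⟩
    have h1 : P.apart (r.1 n) (q.1 (max m n)) :=
      P.apart_mono _ _ _ (P.refines_of_le q.2.mono (le_max_left m n)) (P.apart_symm _ _ hm)
    exact P.apart_mono _ _ _ (P.refines_of_le r.2.mono (le_max_right m n))
      (P.apart_symm _ _ h1)

/-- The setoid of points modulo `≡`. -/
def ptSetoid : Setoid P.Pt :=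
  ⟨P.pEquiv, ⟨P.pEquiv_refl, P.pEquiv_symm, P.pEquiv_trans⟩⟩

/-- `â` : the set of points beginning with the dot `a`. -/
def hatSet (a : V) : Set P.Pt := { p | P.begins p.1 a }

/-- `ā` : the `≡`-closure of `â`. -/
def barSet (a : V) : Set P.Pt := { p | ∃ q : P.Pt, P.begins q.1 a ∧ P.pEquiv p q }

/-- A natural space is basic-open when every `ā` is open. -/
def BasicOpen : Prop := ∀ a : V, IsOpen (P.barSet a)

/-- Existence of a maximal dot. -/
def HasMaxDot : Prop := ∃ m, ∀ a, P.refines a m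

/-- Every basic dot begins at least one point. -/
def AllDotsInhabited : Prop := ∀ a : V, ∃ p : ℕ → V, P.IsPoint p ∧ P.begins p a

/-- The conditions making the point set of a pre-natural space a natural space. -/
def IsNaturalSpace : Prop := P.HasMaxDot ∧ P.AllDotsInhabited

end PreNaturalSpace

/-- A refinement morphism between (pre-)natural spaces: a map on dots sending
points to points and reflecting apartness of points. -/
structure RefMorphism {V W : Type} (P : PreNaturalSpace V) (Q : PreNaturalSpace W) : Type where
  toFun : V → W
  maps_points : ∀ p : ℕ → V, P.IsPoint p → Q.IsPoint (fun n => toFun (p n))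
  reflects_apart : ∀ p q : ℕ → V, P.IsPoint p → P.IsPoint q →
    (∃ n, Q.apart (toFun (p n)) (toFun (q n))) → ∃ n, P.apart (p n) (q n)

/-- The induced map on points of a refinement morphism. -/
def RefMorphism.pointMap {V W : Type} {P : PreNaturalSpace V} {Q : PreNaturalSpace W}
    (f : RefMorphism P Q) (p : P.Pt) : Q.Pt :=
  ⟨fun n => f.toFun (p.1 n), f.maps_points p.1 p.2⟩

namespace PreNaturalSpace

variable {V W : Type} (P : PreNaturalSpace V)

/-- Restriction of a pre-natural space to a subset of dots. -/
noncomputable def restrict (S : Set V) : PreNaturalSpace S where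
  countable' := by haveI := P.countable'; exact inferInstance
  apart a b := P.apart a.1 b.1
  refines a b := P.refines a.1 b.1
  apart_dec := Classical.decRel _
  refines_dec := Classical.decRel _
  apart_symm _ _ h := P.apart_symm _ _ h
  apart_irrefl a := P.apart_irrefl a.1
  apart_mono _ _ _ h1 h2 := P.apart_mono _ _ _ h1 h2
  refines_refl a := P.refines_refl a.1
  refines_trans _ _ _ h1 h2 := P.refines_trans _ _ _ h1 h2
  refines_antisymm _ _ h1 h2 := Subtype.ext (P.refines_antisymm _ _ h1 h2)

/-! ## Trail spaces -/

/-- A `≺`-trail: a finite strictly refining sequence `a₀ ≻ a₁ ≻ …`. -/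
def Trail : Type := { l : List V // l.Chain' fun a b => P.strict b a }

lemma strict_trans_flip : Transitive (fun a b : V => P.strict b a) := by
  rintro a b c ⟨h1, h1'⟩ ⟨h2, h2'⟩
  refine ⟨P.refines_trans _ _ _ h2 h1, fun he => ?_⟩
  exact h2' (P.refines_antisymm _ _ h2 (he ▸ h1))

lemma last_refines_of_prefix {a b : List V}
    (ha : a.Chain' fun x y => P.strict y x) (hpre : b <+: a)
    {x y : V} (hx : x ∈ a.getLast?) (hy : y ∈ b.getLast?) :
    P.refines x y := by
  haveI : IsTrans V (fun x y : V => P.strict y x) := ⟨fun _ _ _ h1 h2 => P.strict_trans_flip h1 h2⟩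
  have hpw : a.Pairwise fun x y => P.strict y x := List.isChain_iff_pairwise.mp ha
  obtain ⟨t, rfl⟩ := hpre
  rcases eq_or_ne t [] with rfl | ht
  · rw [List.append_nil] at hx
    have : x = y := by
      rw [Option.mem_def] at hx hy
      exact Option.some_injective _ (hx ▸ hy ▸ rfl)
    exact this ▸ P.refines_refl x
  · rw [List.getLast?_append_of_ne_nil _ ht] at hx
    have hxt : x ∈ t := List.mem_of_mem_getLast? hx
    have hyb : y ∈ b := List.mem_of_mem_getLast? hy
    have := (List.pairwise_append.mp hpw).2.2 y hyb x hxt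
    exact this.1

/-- The trail space of a pre-natural space: dots are `≺`-trails, with
`a ⊑* b` iff `b` is an initial segment of `a`, and `a #* b` iff the last
dots of `a` and `b` are apart. -/
noncomputable def trailSpace : PreNaturalSpace P.Trail where
  countable' := by haveI := P.countable'; exact inferInstanceAs (Countable
    { l : List V // l.Chain' fun a b => P.strict b a })
  apart a b := ∃ x ∈ a.1.getLast?, ∃ y ∈ b.1.getLast?, P.apart x y
  refines a b := b.1 <+: a.1
  apart_dec := Classical.decRel _
  refines_dec := Classical.decRel _
  apart_symm := by
    rintro a b ⟨x, hx, y, hy, hxy⟩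
    exact ⟨y, hy, x, hx, P.apart_symm _ _ hxy⟩
  apart_irrefl := by
    rintro a ⟨x, hx, y, hy, hxy⟩
    rw [Option.mem_def] at hx hy
    have : x = y := Option.some_injective _ (hx ▸ hy ▸ rfl)
    exact P.apart_irrefl x (this ▸ hxy)
  apart_mono := by
    rintro a b c hab ⟨x, hx, y, hy, hxy⟩
    have hbne : b.1 ≠ [] := by
      intro h
      rw [h] at hy
      simp at hy
    have hane : a.1 ≠ [] := by
      intro h
      exact hbne (List.prefix_nil.mp (h ▸ hab))
    obtain ⟨z, hz⟩ : ∃ z, z ∈ a.1.getLast? := by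
      rcases h : a.1.getLast? with _ | z
      · exact absurd (List.getLast?_eq_none_iff.mp h) hane
      · exact ⟨z, rfl⟩
    have hzy : P.refines z y := P.last_refines_of_prefix a.2 hab hz hy
    exact ⟨x, hx, z, hz, P.apart_mono _ _ _ hzy hxy⟩
  refines_refl a := List.prefix_refl a.1
  refines_trans _ _ _ h1 h2 := h2.trans h1
  refines_antisymm a b h1 h2 :=
    Subtype.ext (h2.eq_of_length (le_antisymm h2.length_le h1.length_le))

end PreNaturalSpace

open Classical in
/-- `p♯(n)` : the `≺`-trail obtained from `p₀, …, p_{n-1}` by deleting repetitions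
(for a shrinking sequence `p`, repetitions are consecutive). -/
noncomputable def segList {V : Type} (p : ℕ → V) : ℕ → List V
  | 0 => []
  | n + 1 =>
    if (segList p n).getLast? = some (p n) then segList p n
    else segList p n ++ [p n]

namespace PreNaturalSpace

variable {V W : Type} (P : PreNaturalSpace V)

/-- The map on trail dots sending a nonempty trail to its last element and
the empty trail to `m`. -/
def lastDot (m : V) (q : P.Trail) : V := q.1.getLast?.getD m

/-- `g` is the point map induced by a trail morphism `f` (a refinement morphism
on the trail space): `g p = f (p♯(0)), f (p♯(1)), …`. -/
def InducedByTrailMorphism (Q : PreNaturalSpace W) (f : RefMorphism P.trailSpace Q)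
    (g : P.Pt → Q.Pt) : Prop :=
  ∀ p : P.Pt, ∃ t : P.trailSpace.Pt, (∀ n, (t.1 n).1 = segList p.1 n) ∧ g p = f.pointMap t

/-- `g` is a natural morphism map: induced by a refinement morphism or by a trail morphism. -/
def IsNaturalMorphismMap (Q : PreNaturalSpace W) (g : P.Pt → Q.Pt) : Prop :=
  (∃ f : RefMorphism P Q, ∀ p, g p = f.pointMap p) ∨
  (∃ f : RefMorphism P.trailSpace Q, P.InducedByTrailMorphism Q f g)

/-- Two natural spaces are isomorphic: natural morphisms both ways, inverse up to `≡`. -/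
def AreIsomorphic (Q : PreNaturalSpace W) : Prop :=
  ∃ (f : P.Pt → Q.Pt) (g : Q.Pt → P.Pt),
    P.IsNaturalMorphismMap Q f ∧ Q.IsNaturalMorphismMap P g ∧
    (∀ x, P.pEquiv (g (f x)) x) ∧ (∀ y, Q.pEquiv (f (g y)) y)

/-- A natural space is a basic neighborhood space iff it is isomorphic to a basic-open space. -/
def IsBasicNbhdSpace : Prop :=
  ∃ (W' : Type) (Q : PreNaturalSpace W'), Q.IsNaturalSpace ∧ Q.BasicOpen ∧ P.AreIsomorphic Q

/-! ## Trees, treas, spreads, spraids, fans -/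

/-- `a` is a successor of `c`. -/
def IsSucc (a c : V) : Prop := P.strict a c ∧ ∀ b, P.strict a b → P.refines b c → b = c

/-- A successor-trail (as a list, each entry a successor of the previous one). -/
def SuccChain (l : List V) : Prop := l.Chain' fun x y => P.IsSucc y x

/-- A successor-trail from `m` to `a`. -/
def IsSuccTrailFromTo (m a : V) (l : List V) : Prop :=
  P.SuccChain l ∧ l.head? = some m ∧ l.getLast? = some a

/-- `(V,⊑)` is a tree. -/
def IsTree : Prop :=
  ∃ m, (∀ a, P.refines a m) ∧ ∀ a, ∃! l : List V, P.IsSuccTrailFromTo m a l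

/-- `(V,⊑)` is a trea. -/
def IsTrea : Prop :=
  ∃ m, (∀ a, P.refines a m) ∧ (∀ a, { b | P.refines a b }.Finite) ∧
    ∀ a, ∃ g : ℕ, ∀ l : List V, P.IsSuccTrailFromTo m a l → l.length = g

/-- Every infinite successor-trail is a point. -/
def SuccTrailsArePoints : Prop :=
  ∀ q : ℕ → V, (∀ n, P.IsSucc (q (n + 1)) (q n)) → P.IsPoint q

def IsSpread : Prop := P.IsTree ∧ P.SuccTrailsArePoints

def IsSpraid : Prop := P.IsTrea ∧ P.SuccTrailsArePoints

/-- Finitely branching: every dot has finitely many successors. -/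
def FinBranching : Prop := ∀ a : V, { b | P.IsSucc b a }.Finite

def IsFan : Prop := P.IsSpread ∧ P.FinBranching

def IsFann : Prop := P.IsSpraid ∧ P.FinBranching

end PreNaturalSpace

namespace PreNaturalSpace

variable {V : Type} (P : PreNaturalSpace V)

lemma apart_of_refines {a b a' b' : V} (ha : P.refines a' a) (hb : P.refines b' b)
    (h : P.apart a b) : P.apart a' b' :=
  P.apart_symm _ _ (P.apart_mono _ _ _ ha (P.apart_symm _ _ (P.apart_mono _ _ _ hb h)))

variable {P}

lemma pApart_of_apart {p q : P.Pt} {k m : ℕ} (h : P.apart (p.1 k) (q.1 m)) : P.pApart p q :=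
  ⟨max k m, P.apart_of_refines (P.refines_of_le p.2.mono (le_max_left k m))
    (P.refines_of_le q.2.mono (le_max_right k m)) h⟩

lemma dApart_of_begins {z : ℕ → V} {a b : V} (hz : P.begins z b) (hba : P.apart b a) :
    P.dApart a z :=
  let ⟨j, hj, _⟩ := hz
  ⟨j, P.apart_of_refines hj (P.refines_refl a) hba⟩

end PreNaturalSpace

theorem stmt0_general {V : Type} (P : PreNaturalSpace V) (a : V) :
    IsOpen { z : P.Pt | P.dApart a z.1 } := by
  rintro x ⟨m, hxa⟩ y
  obtain ⟨k, hyx | hya⟩ := y.2.decides (x.1 m) a hxa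
  · exact Or.inl (P.pApart_of_apart hyx)
  · exact Or.inr ⟨k, fun z hz => P.dApart_of_begins hz hya⟩

/-- For a natural space `(𝒱,𝒯_#)` derived from `(V,#,⊑)` and a basic
dot `a ∈ V`, the set `{z ∈ 𝒱 : z # a}` is open in the natural topology. -/
theorem stmt0 {V : Type} (P : PreNaturalSpace V) (hP : P.IsNaturalSpace) (a : V) :
    IsOpen { z : P.Pt | P.dApart a z.1 } :=
  stmt0_general P a
end

section
/- Let 𝒱 be a natural space derived from (V,#,⊑). Then (V^path,#*,⊑*) is a pre-natural space whose space of points 𝒱^path is a natural space, and 𝒱^path is homeomorphic to 𝒱: the map p ↦ (p♯(0),p♯(1),p♯(2),…) sends points of 𝒱 to points of 𝒱^path and induces a homeomorphism of the quotient spaces 𝒱/≡ and 𝒱^path/≡, whose inverse is induced by the map sending a nonempty trail a₀,…,a_n to its last element a_n and the empty trail to the maximal dot. -/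
/-! Since `#*` only compares last dots, the last-dot map `q ↦ (last (q n))ₙ` turns apartness of
trail points into apartness of points, and the last dot of `p♯(n + 1)` is `p n`; hence
`p ↦ p♯` and the last-dot map are mutually inverse up to `≡` and reflect apartness. The last-dot
map is continuous on points. For `p ↦ p♯` continuity is proved on the quotients: if `z` begins
with `y n`, appending the trail of a tail of `z` to `y♯(n + 1)` gives a trail point that begins
with `y♯(n + 1)` and is `≡ z♯`, so a `≡`-saturated open set containing every point beginning
with `y♯(n)` contains `z♯`. -/

theorem continuous_quotientMap_of_isOpen_preimage {X Y : Type*} [TopologicalSpace X]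
    [TopologicalSpace Y] {s : Setoid X} {t : Setoid Y} {f : X → Y}
    (hf : ∀ ⦃a b : X⦄, a ≈ b → f a ≈ f b)
    (h : ∀ U : Set Y, IsOpen U → (∀ y ∈ U, ∀ y', y ≈ y' → y' ∈ U) → IsOpen (f ⁻¹' U)) :
    Continuous (Quotient.map f hf) := by
  refine Continuous.quotient_lift (continuous_def.2 fun W hW => ?_) _
  refine h _ (hW.preimage continuous_quotient_mk') fun y hy y' hy' => ?_
  show Quotient.mk t y' ∈ W
  rwa [← Quotient.sound hy']

section segList

variable {V : Type} (p : ℕ → V)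

@[simp]
lemma segList_zero : segList p 0 = [] := rfl

lemma getLast?_segList_succ (n : ℕ) : (segList p (n + 1)).getLast? = some (p n) := by
  rw [segList]
  split_ifs with h
  · exact h
  · exact List.getLast?_concat

lemma segList_prefix_succ (n : ℕ) : segList p n <+: segList p (n + 1) := by
  rw [segList]
  split_ifs
  · exact List.prefix_refl _
  · exact List.prefix_append _ _

lemma segList_prefix {k n : ℕ} (h : k ≤ n) : segList p k <+: segList p n := by
  induction h with
  | refl => exact List.prefix_refl _
  | step _ ih => exact ih.trans (segList_prefix_succ p _)

lemma head?_segList_succ (n : ℕ) : (segList p (n + 1)).head? = some (p 0) := by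
  induction n with
  | zero => simp [segList]
  | succ n ih =>
    have hne : segList p (n + 1) ≠ [] := fun h => by simpa [h] using getLast?_segList_succ p n
    rw [segList]
    split_ifs
    · exact ih
    · rw [List.head?_append_of_ne_nil _ hne, ih]

end segList

namespace PreNaturalSpace

variable {V : Type} (P : PreNaturalSpace V)

lemma apart_of_refines_s4 {a b c : V} (hab : P.refines a b) (hbc : P.apart b c) : P.apart a c :=
  P.apart_symm _ _ (P.apart_mono _ _ _ hab (P.apart_symm _ _ hbc))

lemma not_apart_of_refines {a b : V} (h : P.refines a b) : ¬ P.apart a b :=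
  fun hab => P.apart_irrefl a (P.apart_mono a b a h hab)

lemma strict_of_strict_of_refines {a b c : V} (hab : P.strict a b) (hbc : P.refines b c) :
    P.strict a c :=
  ⟨P.refines_trans _ _ _ hab.1 hbc,
    fun hac => hab.2 (P.refines_antisymm _ _ hab.1 (by rwa [hac]))⟩

lemma begins_of_refines {p : ℕ → V} {a b : V} (h : P.begins p a) (hab : P.refines a b) :
    P.begins p b :=
  h.imp fun _ hj => P.strict_of_strict_of_refines hj hab

lemma IsPoint.lt_of_strict {P : PreNaturalSpace V} {p : ℕ → V} (hp : P.IsPoint p) {n k : ℕ}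
    (h : P.strict (p k) (p n)) : n < k :=
  lt_of_not_ge fun hkn => h.2 (P.refines_antisymm _ _ h.1 (P.refines_of_le hp.mono hkn))

lemma IsPoint.shift {P : PreNaturalSpace V} {p : ℕ → V} (hp : P.IsPoint p) (j : ℕ) :
    P.IsPoint fun n => p (j + n) where
  mono n := hp.mono (j + n)
  shrink n := by
    obtain ⟨k, hk⟩ := hp.shrink (j + n)
    have hjk : j ≤ k := by have := hp.lt_of_strict hk; omega
    exact ⟨k - j, by rwa [Nat.add_sub_cancel' hjk]⟩
  decides a b hab := by
    obtain ⟨k, hk⟩ := hp.decides a b hab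
    have hjk := P.refines_of_le hp.mono (Nat.le_add_left k j)
    exact ⟨k, hk.imp (P.apart_of_refines_s4 hjk) (P.apart_of_refines_s4 hjk)⟩

def Pt.shift {P : PreNaturalSpace V} (z : P.Pt) (j : ℕ) : P.Pt :=
  ⟨fun n => z.1 (j + n), z.2.shift j⟩

lemma pEquiv_of_refines {p q : P.Pt} (h : ∀ n, P.refines (p.1 n) (q.1 n)) : P.pEquiv p q :=
  fun ⟨n, hn⟩ => P.not_apart_of_refines (h n) hn

lemma pEquiv_shift (z : P.Pt) (j : ℕ) : P.pEquiv (z.shift j) z :=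
  P.pEquiv_of_refines fun n => P.refines_of_le z.2.mono (Nat.le_add_left n j)

lemma pApart_congr {p p' q q' : P.Pt} (hp : P.pEquiv p p') (hq : P.pEquiv q q') :
    P.pApart p q ↔ P.pApart p' q' :=
  ⟨fun h => by_contra fun h' => P.pEquiv_trans hp (P.pEquiv_trans h' (P.pEquiv_symm hq)) h,
    fun h => by_contra fun h' => P.pEquiv_trans (P.pEquiv_symm hp) (P.pEquiv_trans h' hq) h⟩

lemma isChain_segList {p : ℕ → V} (hp : ∀ n, P.refines (p (n + 1)) (p n)) (n : ℕ) :
    (segList p n).IsChain fun a b => P.strict b a := by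
  induction n with
  | zero => exact List.isChain_nil
  | succ n ih =>
    rw [segList]
    split_ifs with hrep
    · exact ih
    refine List.IsChain.append ih (List.isChain_singleton _) fun x hx y hy => ?_
    cases n with
    | zero => simp at hx
    | succ k =>
      simp only [getLast?_segList_succ, Option.mem_def, Option.some_inj, List.head?_cons]
        at hx hy hrep
      subst hx hy
      exact ⟨hp k, fun he => hrep he.symm⟩

lemma IsPoint.segList_ne {P : PreNaturalSpace V} {p : ℕ → V} (hp : P.IsPoint p) {n j : ℕ}
    (hj : P.strict (p j) (p n)) : segList p n ≠ segList p (j + 1) := by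
  intro he
  have hlast := getLast?_segList_succ p j
  rw [← he] at hlast
  cases n with
  | zero => simp at hlast
  | succ k =>
    rw [getLast?_segList_succ, Option.some_inj] at hlast
    exact hj.2 (P.refines_antisymm _ _ hj.1 (hlast ▸ hp.mono k))

lemma trail_pairwise (a : P.Trail) : a.1.Pairwise fun x y => P.strict y x :=
  haveI : IsTrans V fun x y => P.strict y x := ⟨fun _ _ _ h₁ h₂ => P.strict_trans_flip h₁ h₂⟩
  List.isChain_iff_pairwise.mp a.2

lemma ne_nil_of_trailSpace_strict {a b : P.Trail} (h : P.trailSpace.strict a b) : a.1 ≠ [] := by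
  intro ha
  have hb : b.1 = [] := List.prefix_nil.mp (ha ▸ (h.1 : b.1 <+: a.1))
  exact h.2 (Subtype.ext (ha.trans hb.symm))

section lastDot

variable {m : V}

lemma lastDot_eq_of_mem_getLast? {q : P.Trail} {x : V} (h : x ∈ q.1.getLast?) :
    P.lastDot m q = x := by
  simp [lastDot, Option.mem_def.mp h]

lemma lastDot_mem_getLast? {q : P.Trail} (h : q.1 ≠ []) : P.lastDot m q ∈ q.1.getLast? := by
  simp [lastDot, List.getLast?_eq_some_getLast h]

lemma refines_lastDot (hm : ∀ a, P.refines a m) {a b : P.Trail} (h : b.1 <+: a.1) :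
    P.refines (P.lastDot m a) (P.lastDot m b) := by
  by_cases hb : b.1 = []
  · simpa [lastDot, hb] using hm _
  have ha : a.1 ≠ [] := fun ha => hb (List.prefix_nil.mp (ha ▸ h))
  exact P.last_refines_of_prefix a.2 h (P.lastDot_mem_getLast? ha) (P.lastDot_mem_getLast? hb)

lemma strict_lastDot {a b : P.Trail} (hb : b.1 ≠ []) (h : P.trailSpace.strict a b) :
    P.strict (P.lastDot m a) (P.lastDot m b) := by
  obtain ⟨t, ht⟩ := (h.1 : b.1 <+: a.1)
  have ht0 : t ≠ [] := by
    rintro rfl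
    exact h.2 (Subtype.ext (by simpa using ht.symm))
  have hpw := List.pairwise_append.mp (ht ▸ P.trail_pairwise a)
  have hxa : P.lastDot m a ∈ t := by
    have hx := P.lastDot_mem_getLast? (m := m) (P.ne_nil_of_trailSpace_strict h)
    rw [← ht, List.getLast?_append_of_ne_nil _ ht0] at hx
    exact List.mem_of_mem_getLast? hx
  exact hpw.2.2 _ (List.mem_of_mem_getLast? (P.lastDot_mem_getLast? hb)) _ hxa

lemma trailSpace_apart_iff (hm : ∀ a, P.refines a m) {a b : P.Trail} :
    P.trailSpace.apart a b ↔ P.apart (P.lastDot m a) (P.lastDot m b) := by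
  have hmax : ∀ x, ¬ P.apart m x := fun x h => P.not_apart_of_refines (hm x) (P.apart_symm _ _ h)
  have hmax' : ∀ x, ¬ P.apart x m := fun x h => hmax x (P.apart_symm _ _ h)
  show (∃ x ∈ a.1.getLast?, ∃ y ∈ b.1.getLast?, P.apart x y) ↔
    P.apart (a.1.getLast?.getD m) (b.1.getLast?.getD m)
  cases a.1.getLast? <;> cases b.1.getLast? <;> simp [hmax, hmax']

lemma begins_lastDot {q : ℕ → P.Trail} {b : P.Trail} (hb : b.1 ≠ [])
    (h : P.trailSpace.begins q b) : P.begins (fun n => P.lastDot m (q n)) (P.lastDot m b) :=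
  h.imp fun _ => P.strict_lastDot hb

lemma isPoint_lastDot (hm : ∀ a, P.refines a m) (q : P.trailSpace.Pt) :
    P.IsPoint fun n => P.lastDot m (q.1 n) where
  mono n := P.refines_lastDot hm (q.2.mono n)
  shrink n := by
    obtain ⟨k, hk⟩ := q.2.shrink n
    exact P.begins_of_refines (P.begins_lastDot (P.ne_nil_of_trailSpace_strict hk) (q.2.shrink k))
      (P.refines_lastDot hm hk.1)
  decides a b hab := by
    obtain ⟨k, hk⟩ := q.2.decides ⟨[a], List.isChain_singleton a⟩ ⟨[b], List.isChain_singleton b⟩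
      ⟨a, rfl, b, rfl, hab⟩
    exact ⟨k, hk.imp (P.trailSpace_apart_iff hm).1 (P.trailSpace_apart_iff hm).1⟩

end lastDot

section lastDotPoint

variable {m : V} (hm : ∀ a, P.refines a m)

def lastDotPoint (q : P.trailSpace.Pt) : P.Pt :=
  ⟨fun n => P.lastDot m (q.1 n), P.isPoint_lastDot hm q⟩

lemma trailSpace_pApart_iff {s t : P.trailSpace.Pt} :
    P.trailSpace.pApart s t ↔ P.pApart (P.lastDotPoint hm s) (P.lastDotPoint hm t) :=
  exists_congr fun _ => P.trailSpace_apart_iff hm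

lemma continuous_lastDotPoint : Continuous (P.lastDotPoint hm) := by
  refine continuous_def.2 fun U hU q hq t => ?_
  rcases hU _ hq (P.lastDotPoint hm t) with h | ⟨k, hk⟩
  · exact Or.inl ((P.trailSpace_pApart_iff hm).2 h)
  obtain ⟨k', hk'⟩ := t.2.shrink k
  refine Or.inr ⟨k', fun s hs => hk ?_⟩
  exact P.begins_of_refines (P.begins_lastDot (P.ne_nil_of_trailSpace_strict hk') hs)
    (P.refines_lastDot hm hk'.1)

end lastDotPoint

lemma isChain_append_segList (l : P.Trail) {p : ℕ → V} (hp : ∀ n, P.refines (p (n + 1)) (p n))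
    (hl : ∀ x ∈ l.1.getLast?, P.strict (p 0) x) (n : ℕ) :
    (l.1 ++ segList p n).IsChain fun a b => P.strict b a := by
  refine List.IsChain.append l.2 (P.isChain_segList hp n) fun x hx y hy => ?_
  cases n with
  | zero => simp at hy
  | succ n =>
    rw [head?_segList_succ, Option.mem_some_iff] at hy
    exact hy ▸ hl x hx

lemma isPoint_append_segList (l : P.Trail) (p : P.Pt)
    (hl : ∀ x ∈ l.1.getLast?, P.strict (p.1 0) x) :
    P.trailSpace.IsPoint fun n =>
      ⟨l.1 ++ segList p.1 n, P.isChain_append_segList l p.2.mono hl n⟩ where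
  mono n := (List.prefix_append_right_inj l.1).mpr (segList_prefix_succ p.1 n)
  shrink n := by
    obtain ⟨j, hj⟩ := p.2.shrink n
    refine ⟨j + 1, (List.prefix_append_right_inj l.1).mpr (segList_prefix p.1 ?_), fun he => ?_⟩
    · have := p.2.lt_of_strict hj
      omega
    · exact p.2.segList_ne hj (List.append_cancel_left (congrArg Subtype.val he)).symm
  decides a b hab := by
    obtain ⟨x, hx, y, hy, hxy⟩ := hab
    obtain ⟨k, hk⟩ := p.2.decides x y hxy
    have hlast : p.1 k ∈ (l.1 ++ segList p.1 (k + 1)).getLast? := by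
      simp [getLast?_segList_succ]
    exact ⟨k + 1, hk.imp (fun h => ⟨_, hlast, x, hx, h⟩) (fun h => ⟨_, hlast, y, hy, h⟩)⟩

noncomputable def extendPoint (l : P.Trail) (p : P.Pt)
    (hl : ∀ x ∈ l.1.getLast?, P.strict (p.1 0) x) : P.trailSpace.Pt :=
  ⟨_, P.isPoint_append_segList l p hl⟩

lemma begins_extendPoint (l : P.Trail) (p : P.Pt) (hl : ∀ x ∈ l.1.getLast?, P.strict (p.1 0) x) :
    P.trailSpace.begins (P.extendPoint l p hl).1 l := by
  refine ⟨1, List.prefix_append _ _, fun he => ?_⟩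
  simpa [extendPoint, segList] using congrArg (fun t : P.Trail => t.1.length) he

lemma refines_lastDot_extendPoint {m : V} (hm : ∀ a, P.refines a m) (l : P.Trail) (p : P.Pt)
    (hl : ∀ x ∈ l.1.getLast?, P.strict (p.1 0) x) (n : ℕ) :
    P.refines (p.1 n) (P.lastDot m ((P.extendPoint l p hl).1 n)) := by
  cases n with
  | zero =>
    rcases hx : l.1.getLast? with _ | x
    · simp [lastDot, extendPoint, hx, hm]
    · simp [lastDot, extendPoint, hx, (hl x hx).1]
  | succ n =>
    rw [P.lastDot_eq_of_mem_getLast? (x := p.1 n) (by simp [extendPoint, getLast?_segList_succ])]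
    exact p.2.mono n

lemma trailSpace_hasMaxDot : P.trailSpace.HasMaxDot :=
  ⟨⟨[], List.isChain_nil⟩, fun _ => List.nil_prefix⟩

lemma trailSpace_allDotsInhabited [Nonempty V] (hP : P.AllDotsInhabited) :
    P.trailSpace.AllDotsInhabited := by
  intro l
  obtain ⟨p, hp, j, hj⟩ := hP (P.lastDot (Classical.arbitrary V) l)
  have hl : ∀ x ∈ l.1.getLast?, P.strict ((Pt.shift ⟨p, hp⟩ j).1 0) x :=
    fun x hx => P.lastDot_eq_of_mem_getLast? hx ▸ hj
  exact ⟨_, (P.extendPoint l _ hl).2, P.begins_extendPoint l _ hl⟩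

/-- `p♯ = (p♯(0), p♯(1), …)`. -/
noncomputable def trailPoint (p : P.Pt) : P.trailSpace.Pt :=
  P.extendPoint ⟨[], List.isChain_nil⟩ p (by simp)

lemma trailPoint_apply (p : P.Pt) (n : ℕ) : ((P.trailPoint p).1 n).1 = segList p.1 n := rfl

section trailPoint

variable {m : V}

lemma pEquiv_lastDotPoint_extendPoint (hm : ∀ a, P.refines a m) (l : P.Trail) (p : P.Pt)
    (hl : ∀ x ∈ l.1.getLast?, P.strict (p.1 0) x) :
    P.pEquiv (P.lastDotPoint hm (P.extendPoint l p hl)) p :=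
  P.pEquiv_symm (P.pEquiv_of_refines (P.refines_lastDot_extendPoint hm l p hl))

lemma pApart_trailPoint_iff (hm : ∀ a, P.refines a m) {p q : P.Pt} :
    P.trailSpace.pApart (P.trailPoint p) (P.trailPoint q) ↔ P.pApart p q :=
  (P.trailSpace_pApart_iff hm).trans
    (P.pApart_congr (P.pEquiv_lastDotPoint_extendPoint hm _ _ _)
      (P.pEquiv_lastDotPoint_extendPoint hm _ _ _))

lemma pEquiv_trailPoint_lastDotPoint (hm : ∀ a, P.refines a m) (q : P.trailSpace.Pt) :
    P.trailSpace.pEquiv (P.trailPoint (P.lastDotPoint hm q)) q :=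
  fun h => P.pEquiv_lastDotPoint_extendPoint hm _ _ _ ((P.trailSpace_pApart_iff hm).1 h)

lemma pEquiv_extendPoint_shift (hm : ∀ a, P.refines a m) (l : P.Trail) (z : P.Pt) (j : ℕ)
    (hl : ∀ x ∈ l.1.getLast?, P.strict ((z.shift j).1 0) x) :
    P.trailSpace.pEquiv (P.extendPoint l (z.shift j) hl) (P.trailPoint z) :=
  fun h => P.pEquiv_shift z j <| (P.pApart_congr (P.pEquiv_lastDotPoint_extendPoint hm _ _ _)
    (P.pEquiv_lastDotPoint_extendPoint hm _ _ _)).1 ((P.trailSpace_pApart_iff hm).1 h)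

lemma isOpen_preimage_trailPoint (hm : ∀ a, P.refines a m) {U : Set P.trailSpace.Pt}
    (hU : IsOpen U) (hsat : ∀ s ∈ U, ∀ t, P.trailSpace.pEquiv s t → t ∈ U) :
    IsOpen (P.trailPoint ⁻¹' U) := by
  intro x hx y
  rcases hU _ hx (P.trailPoint y) with h | ⟨k, hk⟩
  · exact Or.inl ((P.pApart_trailPoint_iff hm).1 h)
  refine Or.inr ⟨k, fun z ⟨j, hj⟩ => ?_⟩
  have hl : ∀ x ∈ ((P.trailPoint y).1 (k + 1)).1.getLast?, P.strict ((z.shift j).1 0) x := by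
    intro x hx
    rw [trailPoint_apply, getLast?_segList_succ, Option.mem_some_iff] at hx
    exact hx ▸ hj
  refine hsat _ (hk ?_) _ (P.pEquiv_extendPoint_shift hm _ z j hl)
  exact P.trailSpace.begins_of_refines (P.begins_extendPoint _ _ hl) ((P.trailPoint y).2.mono k)

variable (m) in
noncomputable def trailHomeomorph (hm : ∀ a, P.refines a m) :
    Quotient P.ptSetoid ≃ₜ Quotient P.trailSpace.ptSetoid where
  toFun := Quotient.map P.trailPoint fun _ _ h => mt (P.pApart_trailPoint_iff hm).1 h
  invFun := Quotient.map' (P.lastDotPoint hm) fun _ _ h => mt (P.trailSpace_pApart_iff hm).2 h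
  left_inv := Quotient.ind fun p => Quotient.sound (P.pEquiv_lastDotPoint_extendPoint hm _ p _)
  right_inv := Quotient.ind fun q => Quotient.sound (P.pEquiv_trailPoint_lastDotPoint hm q)
  continuous_toFun := continuous_quotientMap_of_isOpen_preimage _
    fun _ hU hsat => P.isOpen_preimage_trailPoint hm hU hsat
  continuous_invFun := (P.continuous_lastDotPoint hm).quotient_map' _

end trailPoint

end PreNaturalSpace

/-- the trail space `𝒱^path` of a natural space `𝒱` is a natural space
(it is a pre-natural space by construction, `P.trailSpace`), the map
`p ↦ (p♯(0),p♯(1),…)` sends points to points and induces a homeomorphism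
`𝒱/≡ ≃ₜ 𝒱^path/≡`, whose inverse is induced by the map sending a nonempty trail
to its last element and the empty trail to the maximal dot `m`. -/
theorem stmt4 {V : Type} (P : PreNaturalSpace V) (m : V) (hm : ∀ a, P.refines a m)
    (hP : P.AllDotsInhabited) :
    P.trailSpace.IsNaturalSpace ∧
    (∀ p : P.Pt, ∃ t : P.trailSpace.Pt, ∀ n, (t.1 n).1 = segList p.1 n) ∧
    (∀ q : P.trailSpace.Pt, ∃ r : P.Pt, ∀ n, r.1 n = P.lastDot m (q.1 n)) ∧
    ∃ h : Quotient P.ptSetoid ≃ₜ Quotient P.trailSpace.ptSetoid,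
      (∀ (p : P.Pt) (t : P.trailSpace.Pt), (∀ n, (t.1 n).1 = segList p.1 n) →
        h (Quotient.mk P.ptSetoid p) = Quotient.mk P.trailSpace.ptSetoid t) ∧
      (∀ (q : P.trailSpace.Pt) (r : P.Pt), (∀ n, r.1 n = P.lastDot m (q.1 n)) →
        h.symm (Quotient.mk P.trailSpace.ptSetoid q) = Quotient.mk P.ptSetoid r) := by
  have : Nonempty V := ⟨m⟩
  refine ⟨⟨P.trailSpace_hasMaxDot, P.trailSpace_allDotsInhabited hP⟩,
    fun p => ⟨P.trailPoint p, P.trailPoint_apply p⟩, fun q => ⟨P.lastDotPoint hm q, fun _ => rfl⟩,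
    P.trailHomeomorph m hm, fun p t ht => ?_, fun q r hr => ?_⟩
  · obtain rfl : t = P.trailPoint p := Subtype.ext (funext fun n => Subtype.ext (ht n))
    rfl
  · obtain rfl : r = P.lastDotPoint hm q := Subtype.ext (funext hr)
    rfl
end
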